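/- arXiv:1901.09297 — 4 statements merged into one kernel-verified Lean document; each statement's English description precedes it below -/
import Mathlib

section
/- For two orthogonal projections E and F on a Hilbert space, the anticommutator satisfies EF + FE ≥ -‖EF - E∧F‖ (E + F), where E∧F denotes the orthogonal projection onto ran E ∩ ran F. -/
open scoped InnerProductSpace ComplexConjugate

/-- The orthogonal projection `E ∧ F` onto `ran E ∩ ran F`. -/
noncomputable def projWedge {H : Type*} [NormedAddCommGroup H] [InnerProductSpace ℂ H]
    [FiniteDimensional ℂ H] (E F : H →L[ℂ] H) : H →L[ℂ] H :=
  (LinearMap.range (E : H →ₗ[ℂ] H) ⊓ LinearMap.range (F : H →ₗ[ℂ] H)).subtypeL ∘L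
    Submodule.orthogonalProjectionOnto (LinearMap.range (E : H →ₗ[ℂ] H) ⊓ LinearMap.range (F : H →ₗ[ℂ] H))

set_option maxHeartbeats 1000000 in
/-- For two orthogonal projections `E` and `F`,
`EF + FE ≥ -‖EF - E∧F‖ (E + F)`. -/
theorem stmt0 {H : Type*} [NormedAddCommGroup H] [InnerProductSpace ℂ H]
    [FiniteDimensional ℂ H] (E F : H →L[ℂ] H)
    (hE : IsSelfAdjoint E) (hE2 : E ∘L E = E)
    (hF : IsSelfAdjoint F) (hF2 : F ∘L F = F) :
    (E ∘L F + F ∘L E + ‖E ∘L F - projWedge E F‖ • (E + F)).IsPositive := by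
  set K := LinearMap.range (E : H →ₗ[ℂ] H) ⊓ LinearMap.range (F : H →ₗ[ℂ] H) with hK
  set G := projWedge E F with hGdef
  have hG_sa : IsSelfAdjoint G := isSelfAdjoint_starProjection K
  have hGmem : ∀ x, G x ∈ K := fun x => (K.orthogonalProjectionOnto x).2
  -- E fixes elements of its range
  have hEfix : ∀ v : H, v ∈ LinearMap.range (E : H →ₗ[ℂ] H) → E v = v := by
    rintro v ⟨y, rfl⟩
    have h := ContinuousLinearMap.ext_iff.mp hE2 y
    simpa using h
  have hFfix : ∀ v : H, v ∈ LinearMap.range (F : H →ₗ[ℂ] H) → F v = v := by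
    rintro v ⟨y, rfl⟩
    have h := ContinuousLinearMap.ext_iff.mp hF2 y
    simpa using h
  have hG2 : ∀ x, G (G x) = G x := by
    intro x
    show (K.orthogonalProjectionOnto (G x) : H) = G x
    exact K.starProjection_eq_self_iff.mpr (hGmem x)
  have hEG : ∀ x, E (G x) = G x := fun x => hEfix _ ((hGmem x).1)
  have hFG : ∀ x, F (G x) = G x := fun x => hFfix _ ((hGmem x).2)
  have hGE : G ∘L E = G := by
    have h1 : E ∘L G = G := by ext x; exact hEG x
    calc G ∘L E = ContinuousLinearMap.adjoint (E ∘L G) := by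
          rw [ContinuousLinearMap.adjoint_comp, hG_sa.adjoint_eq, hE.adjoint_eq]
      _ = G := by rw [h1, hG_sa.adjoint_eq]
  have hGF : G ∘L F = G := by
    have h1 : F ∘L G = G := by ext x; exact hFG x
    calc G ∘L F = ContinuousLinearMap.adjoint (F ∘L G) := by
          rw [ContinuousLinearMap.adjoint_comp, hG_sa.adjoint_eq, hF.adjoint_eq]
      _ = G := by rw [h1, hG_sa.adjoint_eq]
  set c := ‖E ∘L F - G‖ with hc
  have hc0 : 0 ≤ c := norm_nonneg _
  have hEsym : ∀ u v : H, ⟪E u, v⟫_ℂ = ⟪u, E v⟫_ℂ := fun u v =>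
    (ContinuousLinearMap.isSelfAdjoint_iff_isSymmetric.mp hE) u v
  have hFsym : ∀ u v : H, ⟪F u, v⟫_ℂ = ⟪u, F v⟫_ℂ := fun u v =>
    (ContinuousLinearMap.isSelfAdjoint_iff_isSymmetric.mp hF) u v
  have hGsym : ∀ u v : H, ⟪G u, v⟫_ℂ = ⟪u, G v⟫_ℂ := fun u v =>
    (ContinuousLinearMap.isSelfAdjoint_iff_isSymmetric.mp hG_sa) u v
  have hnormFE : ‖F ∘L E - G‖ = c := by
    have h : F ∘L E - G = ContinuousLinearMap.adjoint (E ∘L F - G) := by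
      rw [map_sub, ContinuousLinearMap.adjoint_comp, hE.adjoint_eq, hF.adjoint_eq,
        hG_sa.adjoint_eq]
    rw [h]
    exact ContinuousLinearMap.adjoint.norm_map _
  constructor
  · -- self-adjointness
    have h1 : IsSelfAdjoint (E ∘L F + F ∘L E) := by
      rw [IsSelfAdjoint, star_add, ContinuousLinearMap.star_eq_adjoint,
        ContinuousLinearMap.star_eq_adjoint, ContinuousLinearMap.adjoint_comp,
        ContinuousLinearMap.adjoint_comp, hE.adjoint_eq, hF.adjoint_eq, add_comm]
    have h2 : IsSelfAdjoint (c • (E + F)) := by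
      have hEF : IsSelfAdjoint (E + F) := hE.add hF
      rw [IsSelfAdjoint, star_smul, star_trivial, hEF.star_eq]
    exact ContinuousLinearMap.isSelfAdjoint_iff_isSymmetric.mp (h1.add h2)
  · intro x
    rw [ContinuousLinearMap.reApplyInnerSelf_apply]
    show (0:ℝ) ≤ Complex.re (⟪(E ∘L F + F ∘L E + c • (E + F)) x, x⟫_ℂ)
    have hGa : G (E x - G x) = 0 := by
      have h := ContinuousLinearMap.ext_iff.mp hGE x
      simp only [ContinuousLinearMap.comp_apply] at h
      rw [map_sub, h, hG2, sub_self]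
    have hGb : G (F x - G x) = 0 := by
      have h := ContinuousLinearMap.ext_iff.mp hGF x
      simp only [ContinuousLinearMap.comp_apply] at h
      rw [map_sub, h, hG2, sub_self]
    set a := E x - G x with ha
    set b := F x - G x with hb
    have hEa : E a = a := by rw [ha, map_sub, hEfix (E x) ⟨x, rfl⟩, hEG]
    have hFb : F b = b := by rw [hb, map_sub, hFfix (F x) ⟨x, rfl⟩, hFG]
    have hEx : E x = G x + a := by rw [ha]; abel
    have hFx : F x = G x + b := by rw [hb]; abel
    have horth1 : ⟪a, G x⟫_ℂ = 0 := by
      rw [← hG2 x, ← hGsym, hGa, inner_zero_left]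
    have horth2 : ⟪G x, b⟫_ℂ = 0 := by
      rw [← hG2 x, hGsym, hGb, inner_zero_right]
    have horth1' : ⟪G x, a⟫_ℂ = 0 := by
      rw [← hG2 x, hGsym, hGa, inner_zero_right]
    -- key bound |re ⟪a,b⟫| ≤ c ‖a‖ ‖b‖
    have hab : ⟪a, b⟫_ℂ = ⟪(F ∘L E - G) a, b⟫_ℂ := by
      have h : (F ∘L E - G) a = F a := by
        simp only [ContinuousLinearMap.sub_apply, ContinuousLinearMap.comp_apply, hEa, hGa,
          sub_zero]
      rw [h, hFsym, hFb]
    have hbound : |Complex.re (⟪a, b⟫_ℂ)| ≤ c * ‖a‖ * ‖b‖ := by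
      calc |Complex.re (⟪a, b⟫_ℂ)| ≤ ‖⟪a, b⟫_ℂ‖ := Complex.abs_re_le_norm _
        _ = ‖⟪(F ∘L E - G) a, b⟫_ℂ‖ := by rw [hab]
        _ ≤ ‖(F ∘L E - G) a‖ * ‖b‖ := norm_inner_le_norm _ _
        _ ≤ (‖F ∘L E - G‖ * ‖a‖) * ‖b‖ := by
            gcongr; exact (F ∘L E - G).le_opNorm a
        _ = c * ‖a‖ * ‖b‖ := by rw [hnormFE]
    -- Pythagoras
    have hnE : ‖E x‖ ^ 2 = ‖G x‖ ^ 2 + ‖a‖ ^ 2 := by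
      rw [hEx, @norm_add_sq ℂ, horth1']
      simp
    have hnF : ‖F x‖ ^ 2 = ‖G x‖ ^ 2 + ‖b‖ ^ 2 := by
      rw [hFx, @norm_add_sq ℂ, horth2]
      simp
    have hExx : Complex.re (⟪E x, x⟫_ℂ) = ‖E x‖ ^ 2 := by
      have h : ⟪E x, x⟫_ℂ = ⟪E x, E x⟫_ℂ := by
        nth_rw 1 [← hEfix (E x) ⟨x, rfl⟩]
        rw [hEsym]
      rw [h, @inner_self_eq_norm_sq_to_K ℂ]
      norm_cast
    have hFxx : Complex.re (⟪F x, x⟫_ℂ) = ‖F x‖ ^ 2 := by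
      have h : ⟪F x, x⟫_ℂ = ⟪F x, F x⟫_ℂ := by
        nth_rw 1 [← hFfix (F x) ⟨x, rfl⟩]
        rw [hFsym]
      rw [h, @inner_self_eq_norm_sq_to_K ℂ]
      norm_cast
    have hreEF : Complex.re (⟪E x, F x⟫_ℂ) = ‖G x‖ ^ 2 + Complex.re (⟪a, b⟫_ℂ) := by
      have h : ⟪E x, F x⟫_ℂ = ((‖G x‖ : ℂ)) ^ 2 + ⟪a, b⟫_ℂ := by
        rw [hEx, hFx, inner_add_left, inner_add_right, inner_add_right, horth1, horth2,
          @inner_self_eq_norm_sq_to_K ℂ]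
        simp
      rw [h, Complex.add_re]
      norm_cast
    -- expand the main expression
    have happ : (E ∘L F + F ∘L E + c • (E + F)) x
        = (E ∘L F) x + (F ∘L E) x + (c : ℂ) • (E x + F x) := by
      rw [ContinuousLinearMap.add_apply, ContinuousLinearMap.add_apply,
        ContinuousLinearMap.smul_apply, ContinuousLinearMap.add_apply,
        RCLike.real_smul_eq_coe_smul (K := ℂ)]
      rfl
    have e1 : ⟪(E ∘L F) x, x⟫_ℂ = ⟪F x, E x⟫_ℂ := by
      rw [ContinuousLinearMap.comp_apply, hEsym]
    have e2 : ⟪(F ∘L E) x, x⟫_ℂ = ⟪E x, F x⟫_ℂ := by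
      rw [ContinuousLinearMap.comp_apply, hFsym]
    have hinner : ⟪(E ∘L F + F ∘L E + c • (E + F)) x, x⟫_ℂ
        = ⟪F x, E x⟫_ℂ + ⟪E x, F x⟫_ℂ + (c : ℂ) * (⟪E x, x⟫_ℂ + ⟪F x, x⟫_ℂ) := by
      rw [happ, inner_add_left, inner_add_left, inner_smul_left,
        Complex.conj_ofReal, inner_add_left, e1, e2]
    have h3 : Complex.re (⟪F x, E x⟫_ℂ) = Complex.re (⟪E x, F x⟫_ℂ) := by
      rw [show ⟪F x, E x⟫_ℂ = (starRingEnd ℂ) ⟪E x, F x⟫_ℂ from (inner_conj_symm _ _).symm,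
        Complex.conj_re]
    have hexp : Complex.re (⟪(E ∘L F + F ∘L E + c • (E + F)) x, x⟫_ℂ)
        = 2 * ‖G x‖ ^ 2 + 2 * Complex.re (⟪a, b⟫_ℂ) + c * (‖E x‖ ^ 2 + ‖F x‖ ^ 2) := by
      rw [hinner]
      rw [Complex.add_re, Complex.add_re, Complex.re_ofReal_mul, Complex.add_re,
        h3, hreEF, hExx, hFxx]
      ring
    have hpos : (0:ℝ) ≤ 2 * ‖G x‖ ^ 2 + 2 * Complex.re (⟪a, b⟫_ℂ)
        + c * (‖E x‖ ^ 2 + ‖F x‖ ^ 2) := by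
      nlinarith [sq_nonneg (‖a‖ - ‖b‖), sq_nonneg ‖G x‖,
      abs_le.mp hbound, mul_nonneg hc0 (mul_nonneg (norm_nonneg a) (norm_nonneg b)),
      mul_nonneg hc0 (sq_nonneg (‖a‖ - ‖b‖))]
    linarith [hexp, hpos]
end

section
/- Let H = ∑_{v∈V} P_v be a sum of orthogonal projections indexed by a finite graph (V,E), such that P_v and P_w commute whenever {v,w} is not an edge, and each vertex has degree at most d. If ε := max over edges {v,w} of ‖(1-P_v)(1-P_w) - (1-P_v)∧(1-P_w)‖ satisfies ε < 1/d, then H² ≥ (1 - dε) H, so the spectral gap of H above 0 is at least 1 - dε. -/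
/-!
Expanding `‖H x‖² = ∑_{v,w} re ⟪P_v x, P_w x⟫`, the diagonal terms sum to
`re ⟪H x, x⟫ = ∑_v ‖P_v x‖²`, the terms of non-adjacent pairs are nonnegative because the product
of commuting projections is a projection, and the term of an edge `{v, w}` is at least
`-(ε/2) (‖P_v x‖² + ‖P_w x‖²)`. Summing, each `‖P_v x‖²` is charged at most `deg v ≤ d` times, so
`‖H x‖² ≥ (1 - dε) re ⟪H x, x⟫`, which is `H² ≥ (1 - dε) H`; on an eigenvector with eigenvalue
`c > 0` it reads `c² ≥ (1 - dε) c`.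

For the edge estimate, let `W = (1-P)∧(1-Q)`. Then `A = 1-P-W` and `B = 1-Q-W` are projections
with `AB = (1-P)(1-Q) - W`, so `‖AB‖ ≤ ε`, and `P x = (1-A) y`, `Q x = (1-B) y` for `y = (1-W) x`.
With `a = A y`, `b = B y` one has `‖a‖² + ‖b‖² = re ⟪y, a + b⟫ ≤ ‖y‖ ‖a + b‖` and
`|⟪a, b⟫| = |⟪a, AB b⟫| ≤ ε ‖a‖ ‖b‖`, and these two inequalities give the bound.
-/

open scoped InnerProductSpace
open RCLike

section projWedge
variable {H : Type*} [NormedAddCommGroup H] [InnerProductSpace ℂ H] [FiniteDimensional ℂ H]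

lemma isStarProjection_projWedge (E F : H →L[ℂ] H) : IsStarProjection (projWedge E F) :=
  isStarProjection_starProjection

lemma mul_projWedge_of_le {E F G : H →L[ℂ] H} (hG : IsIdempotentElem G)
    (h : LinearMap.range (E : H →ₗ[ℂ] H) ⊓ LinearMap.range (F : H →ₗ[ℂ] H) ≤
      LinearMap.range (G : H →ₗ[ℂ] H)) :
    G * projWedge E F = projWedge E F := by
  ext x
  exact (LinearMap.IsIdempotentElem.mem_range_iff
    (ContinuousLinearMap.IsIdempotentElem.toLinearMap hG)).mp
    (h (Submodule.starProjection_apply_mem _ x))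

lemma IsStarProjection.sub_projWedge_left {E : H →L[ℂ] H} (hE : IsStarProjection E)
    (F : H →L[ℂ] H) : IsStarProjection (E - projWedge E F) :=
  (isStarProjection_projWedge E F).sub_of_mul_eq_right hE
    (mul_projWedge_of_le hE.isIdempotentElem inf_le_left)

lemma IsStarProjection.sub_projWedge_right {F : H →L[ℂ] H} (hF : IsStarProjection F)
    (E : H →L[ℂ] H) : IsStarProjection (F - projWedge E F) :=
  (isStarProjection_projWedge E F).sub_of_mul_eq_right hF
    (mul_projWedge_of_le hF.isIdempotentElem inf_le_right)

end projWedge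

/- Used with `Y = ‖y‖`, `s = ‖a‖² + ‖b‖²`, `r = re ⟪a, b⟫`; the main case is the factorization
`(s/2 - r) (ε s/2 - r) ≥ 0` after dividing `s² ≤ Y² (s + 2r)` by `s + 2r`. -/
private lemma two_projection_scalar_bound {ε Y s r : ℝ} (hε : 0 ≤ ε) (hr : |r| ≤ s / 2)
    (hrε : |r| ≤ ε * s / 2) (hY : s ^ 2 ≤ Y ^ 2 * (s + 2 * r)) :
    -(ε / 2) * (2 * Y ^ 2 - s) ≤ Y ^ 2 - s + r := by
  obtain ⟨hr₁, hr₂⟩ := abs_le.mp hr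
  obtain ⟨-, hrε₂⟩ := abs_le.mp hrε
  rcases (show 0 ≤ s + 2 * r by linarith).eq_or_lt with h | h
  · have hs : s = 0 := by nlinarith
    obtain rfl : r = 0 := by linarith
    subst hs
    nlinarith [sq_nonneg Y]
  · nlinarith [mul_nonneg (sub_nonneg.2 hr₂) (sub_nonneg.2 hrε₂), mul_pos h h]

namespace IsStarProjection
variable {𝕜 E : Type*} [RCLike 𝕜] [NormedAddCommGroup E] [InnerProductSpace 𝕜 E]
  [CompleteSpace E] {p q : E →L[𝕜] E}

lemma apply_apply (hp : IsStarProjection p) (x : E) : p (p x) = p x :=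
  congr($(hp.isIdempotentElem.eq) x)

lemma inner_apply_left (hp : IsStarProjection p) (x y : E) : ⟪p x, y⟫_𝕜 = ⟪x, p y⟫_𝕜 :=
  hp.isSelfAdjoint.isSymmetric x y

lemma re_inner_self_apply (hp : IsStarProjection p) (x : E) : re ⟪x, p x⟫_𝕜 = ‖p x‖ ^ 2 := by
  rw [← hp.apply_apply, ← hp.inner_apply_left, hp.apply_apply, inner_self_eq_norm_sq]

lemma re_inner_apply_apply_nonneg (hp : IsStarProjection p) (hq : IsStarProjection q)
    (hpq : Commute p q) (x : E) : 0 ≤ re ⟪p x, q x⟫_𝕜 := by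
  rw [hp.inner_apply_left, ← mul_apply_eq_comp, (hp.mul hq hpq).re_inner_self_apply]
  positivity

theorem neg_half_mul_le_re_inner_one_sub (hp : IsStarProjection p) (hq : IsStarProjection q)
    {ε : ℝ} (hpq : ‖p * q‖ ≤ ε) (y : E) :
    -(ε / 2) * (‖(1 - p) y‖ ^ 2 + ‖(1 - q) y‖ ^ 2) ≤ re ⟪(1 - p) y, (1 - q) y⟫_𝕜 := by
  have hε : 0 ≤ ε := (norm_nonneg _).trans hpq
  set a := p y
  set b := q y
  have hya : re ⟪y, a⟫_𝕜 = ‖a‖ ^ 2 := hp.re_inner_self_apply y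
  have hyb : re ⟪y, b⟫_𝕜 = ‖b‖ ^ 2 := hq.re_inner_self_apply y
  have hab : ‖⟪a, b⟫_𝕜‖ ≤ ε * (‖a‖ * ‖b‖) := by
    have hpqb : ⟪a, b⟫_𝕜 = ⟪a, (p * q) b⟫_𝕜 := by
      rw [mul_apply_eq_comp, hq.apply_apply, ← hp.inner_apply_left, hp.apply_apply]
    calc ‖⟪a, b⟫_𝕜‖ ≤ ‖a‖ * ‖(p * q) b‖ := hpqb ▸ norm_inner_le_norm _ _
      _ ≤ ‖a‖ * (‖p * q‖ * ‖b‖) := by gcongr; exact (p * q).le_opNorm b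
      _ ≤ ‖a‖ * (ε * ‖b‖) := by gcongr
      _ = ε * (‖a‖ * ‖b‖) := by ring
  have hamgm : ‖a‖ * ‖b‖ ≤ (‖a‖ ^ 2 + ‖b‖ ^ 2) / 2 := by nlinarith [sq_nonneg (‖a‖ - ‖b‖)]
  have hcs : (‖a‖ ^ 2 + ‖b‖ ^ 2) ^ 2 ≤ ‖y‖ ^ 2 * (‖a‖ ^ 2 + ‖b‖ ^ 2 + 2 * re ⟪a, b⟫_𝕜) := by
    have hle : ‖a‖ ^ 2 + ‖b‖ ^ 2 ≤ ‖y‖ * ‖a + b‖ := by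
      rw [← hya, ← hyb, ← map_add, ← inner_add_right]
      exact re_inner_le_norm y (a + b)
    have hsq : ‖a + b‖ ^ 2 = ‖a‖ ^ 2 + ‖b‖ ^ 2 + 2 * re ⟪a, b⟫_𝕜 := by
      rw [norm_add_sq (𝕜 := 𝕜)]; ring
    rw [← hsq, ← mul_pow]
    exact pow_le_pow_left₀ (by positivity) hle 2
  have hpy : ‖(1 - p) y‖ ^ 2 = ‖y‖ ^ 2 - ‖a‖ ^ 2 := by
    rw [sub_apply, one_apply_eq_self, norm_sub_sq (𝕜 := 𝕜), hya]; ring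
  have hqy : ‖(1 - q) y‖ ^ 2 = ‖y‖ ^ 2 - ‖b‖ ^ 2 := by
    rw [sub_apply, one_apply_eq_self, norm_sub_sq (𝕜 := 𝕜), hyb]; ring
  have hpqy : re ⟪(1 - p) y, (1 - q) y⟫_𝕜 = ‖y‖ ^ 2 - (‖a‖ ^ 2 + ‖b‖ ^ 2) + re ⟪a, b⟫_𝕜 := by
    rw [sub_apply, sub_apply, one_apply_eq_self, inner_sub_left, inner_sub_right,
      inner_sub_right, map_sub, map_sub, map_sub, inner_self_eq_norm_sq, hyb, inner_re_symm, hya]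
    ring
  rw [hpy, hqy, hpqy]
  have := two_projection_scalar_bound hε
    ((abs_re_le_norm _).trans ((norm_inner_le_norm a b).trans hamgm))
    ((abs_re_le_norm _).trans (hab.trans (by rw [mul_div_assoc]; gcongr))) hcs
  linarith

end IsStarProjection

theorem neg_half_mul_le_re_inner_of_norm_sub_projWedge_le {H : Type*} [NormedAddCommGroup H]
    [InnerProductSpace ℂ H] [FiniteDimensional ℂ H] {P Q : H →L[ℂ] H}
    (hP : IsStarProjection P) (hQ : IsStarProjection Q) {ε : ℝ}
    (hε : ‖(1 - P) ∘L (1 - Q) - projWedge (1 - P) (1 - Q)‖ ≤ ε) (x : H) :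
    -(ε / 2) * (‖P x‖ ^ 2 + ‖Q x‖ ^ 2) ≤ re ⟪P x, Q x⟫_ℂ := by
  have hW := isStarProjection_projWedge (1 - P) (1 - Q)
  have hA := hP.one_sub.sub_projWedge_left (1 - Q)
  have hB := hQ.one_sub.sub_projWedge_right (1 - P)
  have hPW : P * projWedge (1 - P) (1 - Q) = 0 := by
    simpa [sub_mul] using mul_projWedge_of_le hP.one_sub.isIdempotentElem (F := 1 - Q) inf_le_left
  have hQW : Q * projWedge (1 - P) (1 - Q) = 0 := by
    simpa [sub_mul] using mul_projWedge_of_le hQ.one_sub.isIdempotentElem (E := 1 - P) inf_le_right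
  rw [← ContinuousLinearMap.mul_def] at hε
  generalize projWedge (1 - P) (1 - Q) = W at *
  have hWQ : W * Q = 0 := by
    simpa [hQ.isSelfAdjoint.star_eq, hW.isSelfAdjoint.star_eq] using congr(star $hQW)
  have hWW : W * W = W := hW.isIdempotentElem.eq
  have hAB : (1 - P - W) * (1 - Q - W) = (1 - P) * (1 - Q) - W := by
    calc _ = (1 - P) * (1 - Q) - W + P * W + W * Q + (W * W - W) := by noncomm_ring
      _ = _ := by rw [hPW, hWQ, hWW, sub_self, add_zero, add_zero, add_zero]
  have hPA : P = (1 - (1 - P - W)) * (1 - W) := by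
    calc P = P + (W - W * W) - P * W := by rw [hPW, hWW, sub_self, add_zero, sub_zero]
      _ = _ := by noncomm_ring
  have hQB : Q = (1 - (1 - Q - W)) * (1 - W) := by
    calc Q = Q + (W - W * W) - Q * W := by rw [hQW, hWW, sub_self, add_zero, sub_zero]
      _ = _ := by noncomm_ring
  have key := hA.neg_half_mul_le_re_inner_one_sub hB (hAB ▸ hε) ((1 - W) x)
  rwa [← mul_apply_eq_comp, ← mul_apply_eq_comp, ← hPA, ← hQB] at key

namespace SimpleGraph
variable {V : Type*} [Fintype V] (G : SimpleGraph V) [DecidableRel G.Adj]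

lemma sum_ite_adj_const (v : V) (c : ℝ) :
    ∑ w, (if G.Adj v w then c else 0) = G.degree v * c := by
  rw [← Finset.sum_filter, ← neighborFinset_eq_filter, Finset.sum_const,
    card_neighborFinset_eq_degree, nsmul_eq_mul]

lemma sum_sum_ite_adj_add (f : V → ℝ) :
    ∑ v, ∑ w, (if G.Adj v w then f v + f w else 0) = 2 * ∑ v, G.degree v * f v := by
  have hswap : ∑ v, ∑ w, (if G.Adj v w then f w else 0) =
      ∑ v, ∑ w, (if G.Adj v w then f v else 0) := by
    rw [Finset.sum_comm]
    simp_rw [G.adj_comm]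
  simp only [ite_add_zero, Finset.sum_add_distrib, hswap, G.sum_ite_adj_const]
  ring

theorem mul_sum_le_sum_sum [DecidableEq V] {d : ℕ} (hdeg : ∀ v, G.degree v ≤ d)
    {ε : ℝ} (hε : 0 ≤ ε) {f : V → ℝ} (hf : ∀ v, 0 ≤ f v) {r : V → V → ℝ}
    (hdiag : ∀ v, f v ≤ r v v) (hadj : ∀ v w, G.Adj v w → -(ε / 2) * (f v + f w) ≤ r v w)
    (hnonadj : ∀ v w, v ≠ w → ¬ G.Adj v w → 0 ≤ r v w) :
    (1 - d * ε) * ∑ v, f v ≤ ∑ v, ∑ w, r v w := by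
  have hdeg_sum : ∑ v, G.degree v * f v ≤ d * ∑ v, f v := by
    rw [Finset.mul_sum]
    gcongr with v
    · exact hf v
    · exact_mod_cast hdeg v
  have hlower : ∀ v w,
      (if v = w then f v else 0) - (if G.Adj v w then ε / 2 * (f v + f w) else 0) ≤ r v w := by
    intro v w
    by_cases hvw : v = w
    · subst hvw
      simpa using hdiag v
    by_cases hvw' : G.Adj v w
    · simpa [hvw, hvw'] using hadj v w hvw'
    · simpa [hvw, hvw'] using hnonadj v w hvw hvw'
  calc (1 - d * ε) * ∑ v, f v ≤ ∑ v, f v - ε * ∑ v, G.degree v * f v := by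
        linarith [mul_le_mul_of_nonneg_left hdeg_sum hε]
    _ = ∑ v, ∑ w,
          ((if v = w then f v else 0) - if G.Adj v w then ε / 2 * (f v + f w) else 0) := by
        simp only [Finset.sum_sub_distrib, Finset.sum_ite_eq, Finset.mem_univ, if_true,
          ← mul_ite_zero, ← Finset.mul_sum, G.sum_sum_ite_adj_add]
        ring
    _ ≤ ∑ v, ∑ w, r v w := by gcongr with v _ w _; exact hlower v w

end SimpleGraph

namespace ContinuousLinearMap
variable {E : Type*} [NormedAddCommGroup E] [InnerProductSpace ℂ E]

theorem isPositive_comp_self_sub_smul [CompleteSpace E] {T : E →L[ℂ] E} (hT : IsSelfAdjoint T)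
    {g : ℝ} (h : ∀ x, g * re ⟪T x, x⟫_ℂ ≤ ‖T x‖ ^ 2) : (T ∘L T - g • T).IsPositive := by
  have hTT : IsSelfAdjoint (T * T) := by simpa [hT.star_eq] using IsSelfAdjoint.star_mul_self T
  refine isPositive_def'.mpr ⟨hTT.sub ((IsSelfAdjoint.all g).smul hT), fun x => ?_⟩
  rw [reApplyInnerSelf_apply, sub_apply, comp_apply, inner_sub_left, map_sub,
    show ⟪T (T x), x⟫_ℂ = ⟪T x, T x⟫_ℂ from hT.isSymmetric (T x) x, inner_self_eq_norm_sq,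
    smul_apply, real_smul_eq_coe_smul (K := ℂ) g, inner_smul_real_left, RCLike.smul_re]
  linarith [h x]

theorem IsPositive.le_re_of_hasEigenvalue {T : E →L[ℂ] E} (hT : T.IsPositive) {g : ℝ}
    (hTg : (T ∘L T - g • T).IsPositive) {c : ℂ}
    (hc : Module.End.HasEigenvalue (T : E →ₗ[ℂ] E) c) (hc0 : c ≠ 0) : g ≤ c.re := by
  obtain ⟨x, hx, hx0⟩ := hc.exists_hasEigenvector
  have hreal : (c.re : ℂ) = c := conj_eq_iff_re.mp (hT.isSymmetric.conj_eigenvalue_eq_self hc)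
  rw [← hreal] at hc hx hc0
  have hTx : T x = (c.re : ℂ) • x := Module.End.mem_eigenspace_iff.mp hx
  have hc_nonneg : 0 ≤ c.re := eigenvalue_nonneg_of_nonneg hc hT.re_inner_nonneg_right
  have hgap : 0 ≤ c.re ^ 2 - g * c.re := by
    refine eigenvalue_nonneg_of_nonneg (T := ((T ∘L T - g • T : E →L[ℂ] E) : E →ₗ[ℂ] E))
      (Module.End.hasEigenvalue_of_hasEigenvector ⟨Module.End.mem_eigenspace_iff.mpr ?_, hx0⟩)
      hTg.re_inner_nonneg_right
    simp [hTx, smul_smul, sub_smul, pow_two, ← Complex.coe_smul]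
  have hc_pos : 0 < c.re := hc_nonneg.lt_of_ne (by simpa [eq_comm] using hc0)
  nlinarith

end ContinuousLinearMap

theorem stmt2_general {H : Type*} [NormedAddCommGroup H] [InnerProductSpace ℂ H]
    [FiniteDimensional ℂ H] {V : Type*} [Fintype V] [DecidableEq V]
    (G : SimpleGraph V) [DecidableRel G.Adj]
    (d : ℕ) (hdeg : ∀ v, G.degree v ≤ d)
    (P : V → (H →L[ℂ] H))
    (hP : ∀ v, IsSelfAdjoint (P v) ∧ (P v) ∘L (P v) = P v)
    (hcomm : ∀ v w, v ≠ w → ¬ G.Adj v w → Commute (P v) (P w))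
    (ε : ℝ) (hε0 : 0 ≤ ε)
    (hε : ∀ v w, G.Adj v w →
      ‖(1 - P v) ∘L (1 - P w) - projWedge (1 - P v) (1 - P w)‖ ≤ ε) :
    ((∑ v, P v) ∘L (∑ v, P v) - ((1 - (d : ℝ) * ε) • ∑ v, P v)).IsPositive ∧
      ∀ c : ℂ, Module.End.HasEigenvalue ((∑ v, P v : H →L[ℂ] H) : H →ₗ[ℂ] H) c →
        c ≠ 0 → 1 - (d : ℝ) * ε ≤ c.re := by
  have hPs : ∀ v, IsStarProjection (P v) := fun v => ⟨(hP v).2, (hP v).1⟩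
  have hpos : (∑ v, P v).IsPositive :=
    ContinuousLinearMap.isPositive_sum _ fun v _ => .of_isStarProjection (hPs v)
  have hquad : ∀ x, (1 - d * ε) * re ⟪(∑ v, P v) x, x⟫_ℂ ≤ ‖(∑ v, P v) x‖ ^ 2 := by
    intro x
    have hdiag : re ⟪(∑ v, P v) x, x⟫_ℂ = ∑ v, ‖P v x‖ ^ 2 := by
      rw [sum_apply, sum_inner, map_sum]
      exact Finset.sum_congr rfl fun v _ => by rw [inner_re_symm, (hPs v).re_inner_self_apply]
    have hsq : ‖(∑ v, P v) x‖ ^ 2 = ∑ v, ∑ w, re ⟪P v x, P w x⟫_ℂ := by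
      rw [← inner_self_eq_norm_sq (𝕜 := ℂ), sum_apply, sum_inner, map_sum]
      simp_rw [inner_sum, map_sum]
    rw [hdiag, hsq]
    exact G.mul_sum_le_sum_sum hdeg hε0 (fun v => sq_nonneg _)
      (fun v => (inner_self_eq_norm_sq _).ge)
      (fun v w hvw =>
        neg_half_mul_le_re_inner_of_norm_sub_projWedge_le (hPs v) (hPs w) (hε v w hvw) x)
      (fun v w hne hnadj => (hPs v).re_inner_apply_apply_nonneg (hPs w) (hcomm v w hne hnadj) x)
  have hgap := ContinuousLinearMap.isPositive_comp_self_sub_smul hpos.isSelfAdjoint hquad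
  exact ⟨hgap, fun c hc hc0 => hpos.le_re_of_hasEigenvalue hgap hc hc0⟩

/-- For `H = ∑_v P_v` a sum of orthogonal projections indexed by a graph of maximum
degree `d`, with `P_v`, `P_w` commuting on non-edges, if the quantity `ε` bounding the
norms `‖(1-P_v)(1-P_w) - (1-P_v)∧(1-P_w)‖` over edges satisfies `ε < 1/d`, then
`H² ≥ (1 - dε) H` and every nonzero eigenvalue of `H` is at least `1 - dε`. -/
theorem stmt2 {H : Type*} [NormedAddCommGroup H] [InnerProductSpace ℂ H]
    [FiniteDimensional ℂ H] {V : Type*} [Fintype V] [DecidableEq V]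
    (G : SimpleGraph V) [DecidableRel G.Adj]
    (d : ℕ) (hd : 0 < d) (hdeg : ∀ v, G.degree v ≤ d)
    (P : V → (H →L[ℂ] H))
    (hP : ∀ v, IsSelfAdjoint (P v) ∧ (P v) ∘L (P v) = P v)
    (hcomm : ∀ v w, v ≠ w → ¬ G.Adj v w → Commute (P v) (P w))
    (ε : ℝ) (hε0 : 0 ≤ ε)
    (hε : ∀ v w, G.Adj v w →
      ‖(1 - P v) ∘L (1 - P w) - projWedge (1 - P v) (1 - P w)‖ ≤ ε)
    (hεd : ε < 1 / (d : ℝ)) :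
    ((∑ v, P v) ∘L (∑ v, P v) - ((1 - (d : ℝ) * ε) • ∑ v, P v)).IsPositive ∧
      ∀ c : ℂ, Module.End.HasEigenvalue ((∑ v, P v : H →L[ℂ] H) : H →ₗ[ℂ] H) c →
        c ≠ 0 → 1 - (d : ℝ) * ε ≤ c.re :=
  stmt2_general G d hdeg P hP hcomm ε hε0 hε
end

section
/- Let V_1,…,V_d ∈ M_D(ℂ) satisfy ∑_i V_i* V_i = 1, let 𝔼(B) = ∑_i V_i* B V_i be the associated transfer operator, let ρ be a positive definite fixed point of the dual (𝔼^t(ρ) = ρ, Tr ρ = 1), and set a(n) = ‖𝔼^n - |1⟩⟨ρ|‖. Define Γ_n(B) = ∑_{i_1,…,i_n} Tr[B V_{i_n}⋯V_{i_1}] |i_1,…,i_n⟩ ∈ (ℂ^d)^{⊗n}. Then for all B, C ∈ M_D(ℂ): |⟨Γ_n(B), Γ_n(C)⟩ - Tr(ρ B* C)| ≤ a(n) · Tr(ρ^{-1}) · ‖B‖_ρ ‖C‖_ρ. -/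
open Matrix
open scoped ComplexOrder

section FNWaux

variable {D : ℕ}

noncomputable def gnorm (x : Fin D → ℂ) : ℝ := Real.sqrt (∑ p, ‖x p‖^2)

lemma gnorm_nonneg (x : Fin D → ℂ) : 0 ≤ gnorm x := Real.sqrt_nonneg _

lemma gnorm_sq (x : Fin D → ℂ) : gnorm x ^ 2 = ∑ p, ‖x p‖^2 := by
  rw [gnorm, Real.sq_sqrt]
  positivity

lemma star_mul_self_re (z : ℂ) : (star z * z).re = ‖z‖^2 := by
  rw [show star z = (starRingEnd ℂ) z from rfl, Complex.conj_mul']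
  norm_cast

lemma re_dot_self (x : Fin D → ℂ) : (star x ⬝ᵥ x).re = ∑ p, ‖x p‖^2 := by
  rw [dotProduct, Complex.re_sum]
  exact Finset.sum_congr rfl fun p _ => star_mul_self_re (x p)

lemma dot_le (x y : Fin D → ℂ) : ‖star x ⬝ᵥ y‖ ≤ gnorm x * gnorm y := by
  calc ‖star x ⬝ᵥ y‖ ≤ ∑ p, ‖x p‖ * ‖y p‖ := by
        refine (norm_sum_le _ _).trans ?_
        refine Finset.sum_le_sum fun p _ => ?_
        simp [norm_mul]
    _ ≤ gnorm x * gnorm y := by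
        simpa [gnorm] using Real.sum_mul_le_sqrt_mul_sqrt Finset.univ
          (fun p => ‖x p‖) (fun p => ‖y p‖)

lemma fro_eq (M : Matrix (Fin D) (Fin D) ℂ) :
    (Mᴴ * M).trace.re = ∑ p, ∑ q, ‖M p q‖^2 := by
  rw [Matrix.trace]
  simp only [Complex.re_sum, Matrix.diag_apply, Matrix.mul_apply, conjTranspose_apply]
  rw [Finset.sum_comm]
  exact Finset.sum_congr rfl fun p _ => Finset.sum_congr rfl fun q _ => star_mul_self_re _

lemma mulVec_gnorm_le (M : Matrix (Fin D) (Fin D) ℂ) (y : Fin D → ℂ) :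
    gnorm (M.mulVec y) ≤ Real.sqrt ((Mᴴ * M).trace.re) * gnorm y := by
  have h1 : ∀ p, ‖(M.mulVec y) p‖ ≤ gnorm (star (M p)) * gnorm y := by
    intro p
    have := dot_le (star (M p)) y
    simpa [Matrix.mulVec, star_star] using this
  have h2 : gnorm (M.mulVec y) ^ 2 ≤ ((Mᴴ * M).trace.re) * gnorm y ^ 2 := by
    rw [gnorm_sq, fro_eq, Finset.sum_mul]
    refine Finset.sum_le_sum fun p _ => ?_
    calc ‖(M.mulVec y) p‖^2 ≤ (gnorm (star (M p)) * gnorm y)^2 := by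
          apply pow_le_pow_left₀ (norm_nonneg _) (h1 p)
      _ = (∑ q, ‖M p q‖^2) * gnorm y ^ 2 := by
          rw [mul_pow, gnorm_sq]
          simp [Pi.star_apply]
  calc gnorm (M.mulVec y) = Real.sqrt (gnorm (M.mulVec y) ^ 2) := by
        rw [Real.sqrt_sq (gnorm_nonneg _)]
    _ ≤ Real.sqrt (((Mᴴ * M).trace.re) * gnorm y ^ 2) := Real.sqrt_le_sqrt h2
    _ = Real.sqrt ((Mᴴ * M).trace.re) * gnorm y := by
        rw [Real.sqrt_mul, Real.sqrt_sq (gnorm_nonneg _)]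
        · rw [fro_eq]; positivity

lemma dot_mulVec_le (x y : Fin D → ℂ) (M : Matrix (Fin D) (Fin D) ℂ) :
    ‖star x ⬝ᵥ M.mulVec y‖ ≤ gnorm x * (Real.sqrt ((Mᴴ * M).trace.re) * gnorm y) :=
  (dot_le x _).trans (by
    nlinarith [gnorm_nonneg x, gnorm_nonneg (M.mulVec y), mulVec_gnorm_le M y])

lemma sandwich (M N : Matrix (Fin D) (Fin D) ℂ) (v w : Fin D → ℂ) :
    M * vecMulVec v w * N = vecMulVec (M.mulVec v) (w ᵥ* N) := by
  ext a b
  simp only [Matrix.mul_apply, vecMulVec_apply, mulVec, vecMul, dotProduct,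
    Finset.sum_mul, Finset.mul_sum]
  refine Finset.sum_congr rfl fun p _ => Finset.sum_congr rfl fun r _ => by ring

lemma dot_vecMulVec (x y v w : Fin D → ℂ) :
    star x ⬝ᵥ (vecMulVec v w).mulVec y = (star x ⬝ᵥ v) * (w ⬝ᵥ y) := by
  simp only [dotProduct, mulVec, vecMulVec_apply, Finset.mul_sum, Finset.sum_mul,
    Pi.star_apply]
  rw [Finset.sum_comm]
  refine Finset.sum_congr rfl fun p _ => Finset.sum_congr rfl fun q _ => by ring

lemma conj_entry (U M : Matrix (Fin D) (Fin D) ℂ) (q s : Fin D) :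
    (Uᴴ * M * U) q s = star (fun p => U p q) ⬝ᵥ M.mulVec (fun p => U p s) := by
  simp only [dotProduct, mulVec, Matrix.mul_apply, conjTranspose_apply, Pi.star_apply,
    Finset.sum_mul, Finset.mul_sum]
  rw [Finset.sum_comm]
  refine Finset.sum_congr rfl fun p _ => Finset.sum_congr rfl fun r _ => by ring

lemma col_trace (U M : Matrix (Fin D) (Fin D) ℂ) (hU : U * Uᴴ = 1) :
    ∑ q, star (fun p => U p q) ⬝ᵥ M.mulVec (fun p => U p q) = M.trace := by
  simp_rw [← conj_entry]
  have : ∑ q, (Uᴴ * M * U) q q = (Uᴴ * M * U).trace := rfl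
  rw [this, Matrix.trace_mul_cycle, hU, one_mul]

lemma trace_mul_vecMulVec (A : Matrix (Fin D) (Fin D) ℂ) (v w : Fin D → ℂ) :
    (A * vecMulVec v w).trace = w ⬝ᵥ A.mulVec v := by
  simp only [Matrix.trace, Matrix.diag_apply, Matrix.mul_apply, vecMulVec_apply,
    dotProduct, mulVec, Finset.mul_sum]
  refine Finset.sum_congr rfl fun p _ => Finset.sum_congr rfl fun r _ => by ring

lemma dot_conjT (B : Matrix (Fin D) (Fin D) ℂ) (x w : Fin D → ℂ) :
    star x ⬝ᵥ Bᴴ.mulVec w = star (B.mulVec x) ⬝ᵥ w := by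
  rw [Matrix.dotProduct_mulVec, ← Matrix.star_mulVec]

lemma trace_diag_mul (f : Fin D → ℂ) (M : Matrix (Fin D) (Fin D) ℂ) :
    (diagonal f * M).trace = ∑ q, f q * M q q := by
  simp [Matrix.trace, Matrix.diag, Matrix.diagonal_mul]

lemma sum_mulVec' {ι : Type*} (s : Finset ι) (A : ι → Matrix (Fin D) (Fin D) ℂ)
    (v : Fin D → ℂ) : (∑ i ∈ s, A i).mulVec v = ∑ i ∈ s, (A i).mulVec v := by
  ext p
  simp only [mulVec, dotProduct, Finset.sum_apply, Matrix.sum_apply, Finset.sum_mul]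
  rw [Finset.sum_comm]

lemma dot_sum' {ι : Type*} (s : Finset ι) (x : Fin D → ℂ) (f : ι → Fin D → ℂ) :
    x ⬝ᵥ (∑ i ∈ s, f i) = ∑ i ∈ s, x ⬝ᵥ f i := by
  simp only [dotProduct, Finset.sum_apply, Finset.mul_sum]
  rw [Finset.sum_comm]

lemma gamma_term (B C W U : Matrix (Fin D) (Fin D) ℂ) (hU : U * Uᴴ = 1) :
    ∑ q, ∑ s, star (fun p => U p q) ⬝ᵥ
        ((Bᴴ * (Wᴴ * vecMulVec (fun p => U p q) (star (fun p => U p s)) * W) * C).mulVec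
          (fun p => U p s))
      = (starRingEnd ℂ) ((B * W).trace) * ((C * W).trace) := by
  have key : ∀ q s : Fin D, star (fun p => U p q) ⬝ᵥ
        ((Bᴴ * (Wᴴ * vecMulVec (fun p => U p q) (star (fun p => U p s)) * W) * C).mulVec
          (fun p => U p s))
      = (star (fun p => U p q) ⬝ᵥ (Bᴴ * Wᴴ).mulVec (fun p => U p q)) *
        (star (fun p => U p s) ⬝ᵥ (W * C).mulVec (fun p => U p s)) := by
    intro q s
    have assoc : Bᴴ * (Wᴴ * vecMulVec (fun p => U p q) (star (fun p => U p s)) * W) * C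
        = (Bᴴ * Wᴴ) * vecMulVec (fun p => U p q) (star (fun p => U p s)) * (W * C) := by
      noncomm_ring
    rw [assoc, sandwich, dot_vecMulVec, ← Matrix.dotProduct_mulVec]
  simp_rw [key]
  rw [← Finset.sum_mul_sum]
  rw [col_trace _ _ hU, col_trace _ _ hU]
  congr 1
  · rw [← Matrix.conjTranspose_mul, Matrix.trace_conjTranspose, Matrix.trace_mul_comm]
    rfl
  · exact Matrix.trace_mul_comm W C

lemma kraus_iter {d : ℕ} (V : Fin d → Matrix (Fin D) (Fin D) ℂ) (n : ℕ)
    (X : Matrix (Fin D) (Fin D) ℂ) :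
    (fun Y => ∑ i, (V i)ᴴ * Y * V i)^[n] X
      = ∑ i : Fin n → Fin d,
          ((List.ofFn fun k => V (i k)).reverse.prod)ᴴ * X *
            (List.ofFn fun k => V (i k)).reverse.prod := by
  induction n generalizing X with
  | zero => simp
  | succ n ih =>
      rw [Function.iterate_succ_apply', ih]
      rw [Fintype.sum_equiv (Fin.consEquiv (fun _ : Fin (n+1) => Fin d)).symm _
        (fun p => ((List.ofFn fun k => V ((Fin.cons p.1 p.2 : Fin (n+1) → Fin d) k)).reverse.prod)ᴴ * X *
            (List.ofFn fun k => V ((Fin.cons p.1 p.2 : Fin (n+1) → Fin d) k)).reverse.prod)]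
      · rw [Fintype.sum_prod_type]
        simp only [List.ofFn_succ, Fin.cons_zero, Fin.cons_succ, List.reverse_cons,
          List.prod_append, List.prod_cons, List.prod_nil, mul_one, conjTranspose_mul]
        simp only [Finset.mul_sum, Finset.sum_mul, mul_assoc]
      · intro i
        congr <;> simp [Fin.consEquiv]

end FNWaux

/-- Fannes–Nachtergaele–Werner estimate (Lemma 5.2): for an MPS with isometric tensors
`V_i`, invariant state `ρ`, and `a(n)` bounding the transfer-operator convergence,
`|⟨Γ_n(B), Γ_n(C)⟩ - Tr(ρ B* C)| ≤ a(n) Tr(ρ⁻¹) ‖B‖_ρ ‖C‖_ρ`. -/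
theorem stmt10 {D d n : ℕ} (V : Fin d → Matrix (Fin D) (Fin D) ℂ)
    (hunital : ∑ i, (V i)ᴴ * V i = 1)
    (ρ : Matrix (Fin D) (Fin D) ℂ) (hρ : ρ.PosDef) (htr : ρ.trace = 1)
    (hfix : ∑ i, V i * ρ * (V i)ᴴ = ρ)
    (a : ℝ) (ha0 : 0 ≤ a)
    (ha : ∀ X : Matrix (Fin D) (Fin D) ℂ,
      Real.sqrt (((((fun Y => ∑ i, (V i)ᴴ * Y * V i)^[n] X) - (ρ * X).trace • 1)ᴴ *
          (((fun Y => ∑ i, (V i)ᴴ * Y * V i)^[n] X) - (ρ * X).trace • 1)).trace.re) ≤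
        a * Real.sqrt ((Xᴴ * X).trace.re))
    (B C : Matrix (Fin D) (Fin D) ℂ) :
    ‖(∑ i : Fin n → Fin d,
          (starRingEnd ℂ) ((B * (List.ofFn fun k => V (i k)).reverse.prod).trace) *
            ((C * (List.ofFn fun k => V (i k)).reverse.prod).trace)) -
        (ρ * Bᴴ * C).trace‖ ≤
      a * (ρ⁻¹).trace.re * Real.sqrt ((ρ * Bᴴ * B).trace.re) *
        Real.sqrt ((ρ * Cᴴ * C).trace.re) := by
  classical
  have hH := hρ.1
  set U : Matrix (Fin D) (Fin D) ℂ :=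
    (Matrix.IsHermitian.eigenvectorUnitary hH : Matrix (Fin D) (Fin D) ℂ) with hUdef
  set lam : Fin D → ℝ := hH.eigenvalues with hlam
  have hU1 : Uᴴ * U = 1 := by
    rw [← Matrix.star_eq_conjTranspose]
    exact (Matrix.mem_unitaryGroup_iff').mp (Matrix.IsHermitian.eigenvectorUnitary hH).2
  have hU2 : U * Uᴴ = 1 := by
    rw [← Matrix.star_eq_conjTranspose]
    exact (Matrix.mem_unitaryGroup_iff).mp (Matrix.IsHermitian.eigenvectorUnitary hH).2
  have hspec : ρ = U * diagonal (fun q => (lam q : ℂ)) * Uᴴ := by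
    have := Matrix.IsHermitian.spectral_theorem hH
    convert this using 2
    simp [Unitary.conjStarAlgAut_apply, hUdef, hlam, Function.comp_def, Matrix.star_eq_conjTranspose]
  have hpos : ∀ q, 0 < lam q := fun q => hρ.eigenvalues_pos q
  have hmul : ρ * U = U * diagonal (fun q => (lam q : ℂ)) := by
    rw [hspec, mul_assoc, mul_assoc, hU1, mul_one]
  have heig : ∀ q, ρ.mulVec (fun p => U p q) = fun p => (lam q : ℂ) * U p q := by
    intro q; ext p
    have h1 : ρ.mulVec (fun p => U p q) p = (ρ * U) p q := by
      simp [Matrix.mulVec, Matrix.mul_apply, dotProduct]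
    rw [h1, hmul, Matrix.mul_diagonal, mul_comm]
  have hne : ∀ q, (lam q : ℂ) ≠ 0 := fun q => by
    simp only [ne_eq, Complex.ofReal_eq_zero]; exact (hpos q).ne'
  have hinvmat : ρ⁻¹ = U * diagonal (fun q => (lam q : ℂ)⁻¹) * Uᴴ := by
    apply Matrix.inv_eq_left_inv
    rw [hspec]
    calc U * diagonal (fun q => (lam q : ℂ)⁻¹) * Uᴴ * (U * diagonal (fun q => (lam q : ℂ)) * Uᴴ)
        = U * diagonal (fun q => (lam q : ℂ)⁻¹) * (Uᴴ * U) * diagonal (fun q => (lam q : ℂ)) * Uᴴ := by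
          noncomm_ring
      _ = 1 := by
          rw [hU1, mul_one, mul_assoc U, Matrix.diagonal_mul_diagonal]
          have h9 : (fun q => (lam q : ℂ)⁻¹ * (lam q : ℂ)) = fun _ => (1:ℂ) := by
            ext q; exact inv_mul_cancel₀ (hne q)
          rw [h9, Matrix.diagonal_one, mul_one, hU2]
  have hinvtr : (ρ⁻¹).trace.re = ∑ q, (lam q)⁻¹ := by
    rw [hinvmat, Matrix.trace_mul_cycle, hU1, one_mul, Matrix.trace_diagonal]
    simp
  -- orthonormality of columns
  have horm : ∀ q s : Fin D, star (fun p => U p s) ⬝ᵥ (fun p => U p q)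
      = if s = q then (1:ℂ) else 0 := by
    intro q s
    have h1 : (Uᴴ * U) s q = if s = q then (1:ℂ) else 0 := by
      rw [hU1, Matrix.one_apply]
    rw [← h1]
    simp [Matrix.mul_apply, dotProduct, conjTranspose_apply]
  have hcolnorm : ∀ q, ∑ p, ‖U p q‖^2 = 1 := by
    intro q
    have h1 := horm q q
    simp only [if_pos rfl] at h1
    have h2 := congrArg Complex.re h1
    rw [re_dot_self] at h2
    simpa using h2
  -- abbreviations
  set P : Fin D → Fin D → Matrix (Fin D) (Fin D) ℂ :=
    fun q s => vecMulVec (fun p => U p q) (star (fun p => U p s)) with hP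
  have hPfro : ∀ q s, ((P q s)ᴴ * P q s).trace.re = 1 := by
    intro q s
    rw [fro_eq]
    calc ∑ p, ∑ r, ‖P q s p r‖^2
        = ∑ p, ∑ r, ‖U p q‖^2 * ‖U r s‖^2 := by
          refine Finset.sum_congr rfl fun p _ => Finset.sum_congr rfl fun r _ => ?_
          simp [hP, vecMulVec_apply, norm_mul, mul_pow]
      _ = (∑ p, ‖U p q‖^2) * ∑ r, ‖U r s‖^2 := by rw [← Finset.sum_mul_sum]
      _ = 1 := by rw [hcolnorm, hcolnorm, one_mul]
  have htrP : ∀ q s, (ρ * P q s).trace = if s = q then ((lam q : ℂ)) else 0 := by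
    intro q s
    rw [hP, trace_mul_vecMulVec, heig]
    have : star (fun p => U p s) ⬝ᵥ (fun p => (lam q : ℂ) * U p q)
        = (lam q : ℂ) * (star (fun p => U p s) ⬝ᵥ fun p => U p q) := by
      simp [dotProduct, Finset.mul_sum]; refine Finset.sum_congr rfl fun p _ => by ring
    rw [this, horm]
    split <;> simp
  have htrA : ∀ A : Matrix (Fin D) (Fin D) ℂ, (ρ * A).trace
      = ∑ q, (lam q : ℂ) * (star (fun p => U p q) ⬝ᵥ A.mulVec (fun p => U p q)) := by
    intro A
    conv_lhs => rw [hspec]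
    have e1 : (U * diagonal (fun q => (lam q : ℂ)) * Uᴴ) * A
        = U * (diagonal (fun q => (lam q : ℂ)) * (Uᴴ * A)) := by noncomm_ring
    rw [e1, Matrix.trace_mul_comm]
    have e2 : diagonal (fun q => (lam q : ℂ)) * (Uᴴ * A) * U
        = diagonal (fun q => (lam q : ℂ)) * (Uᴴ * A * U) := by noncomm_ring
    rw [e2, trace_diag_mul]
    simp_rw [conj_entry]
  set gB : Fin D → ℝ := fun q => gnorm (B.mulVec (fun p => U p q)) with hgB
  set gC : Fin D → ℝ := fun q => gnorm (C.mulVec (fun p => U p q)) with hgC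
  have hBtr : ∀ (B : Matrix (Fin D) (Fin D) ℂ), (ρ * Bᴴ * B).trace.re
      = ∑ q, lam q * (gnorm (B.mulVec (fun p => U p q)))^2 := by
    intro B
    rw [mul_assoc, htrA, Complex.re_sum]
    refine Finset.sum_congr rfl fun q _ => ?_
    rw [← Matrix.mulVec_mulVec, dot_conjT, Complex.re_ofReal_mul, re_dot_self, gnorm_sq]
  -- the main identity
  have hS : (∑ i : Fin n → Fin d,
          (starRingEnd ℂ) ((B * (List.ofFn fun k => V (i k)).reverse.prod).trace) *
            ((C * (List.ofFn fun k => V (i k)).reverse.prod).trace)) -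
        (ρ * Bᴴ * C).trace
      = ∑ q, ∑ s, star (fun p => U p q) ⬝ᵥ
          ((Bᴴ * ((fun Y => ∑ i, (V i)ᴴ * Y * V i)^[n] (P q s) - (ρ * P q s).trace • 1) * C).mulVec
            (fun p => U p s)) := by
    have split : ∀ q s, star (fun p => U p q) ⬝ᵥ
          ((Bᴴ * ((fun Y => ∑ i, (V i)ᴴ * Y * V i)^[n] (P q s) - (ρ * P q s).trace • 1) * C).mulVec
            (fun p => U p s))
        = star (fun p => U p q) ⬝ᵥ
            ((Bᴴ * ((fun Y => ∑ i, (V i)ᴴ * Y * V i)^[n] (P q s)) * C).mulVec (fun p => U p s))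
          - star (fun p => U p q) ⬝ᵥ
            ((Bᴴ * ((ρ * P q s).trace • 1) * C).mulVec (fun p => U p s)) := by
      intro q s
      rw [mul_sub, sub_mul, Matrix.sub_mulVec, dotProduct_sub]
    simp_rw [split, Finset.sum_sub_distrib]
    congr 1
    -- first piece
    · have h1 : ∀ q s, star (fun p => U p q) ⬝ᵥ
            ((Bᴴ * ((fun Y => ∑ i, (V i)ᴴ * Y * V i)^[n] (P q s)) * C).mulVec (fun p => U p s))
          = ∑ i : Fin n → Fin d, star (fun p => U p q) ⬝ᵥ
              ((Bᴴ * (((List.ofFn fun k => V (i k)).reverse.prod)ᴴ * P q s *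
                  (List.ofFn fun k => V (i k)).reverse.prod) * C).mulVec (fun p => U p s)) := by
        intro q s
        rw [kraus_iter, Finset.mul_sum, Finset.sum_mul, sum_mulVec', dot_sum']
      simp_rw [h1]
      rw [show (∑ q, ∑ s, ∑ i : Fin n → Fin d, star (fun p => U p q) ⬝ᵥ
              ((Bᴴ * (((List.ofFn fun k => V (i k)).reverse.prod)ᴴ * P q s *
                  (List.ofFn fun k => V (i k)).reverse.prod) * C).mulVec (fun p => U p s)))
          = ∑ i : Fin n → Fin d, ∑ q, ∑ s, star (fun p => U p q) ⬝ᵥ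
              ((Bᴴ * (((List.ofFn fun k => V (i k)).reverse.prod)ᴴ * P q s *
                  (List.ofFn fun k => V (i k)).reverse.prod) * C).mulVec (fun p => U p s)) from
        (Finset.sum_congr rfl fun q _ => Finset.sum_comm).trans Finset.sum_comm]
      refine Finset.sum_congr rfl fun i _ => ?_
      exact (gamma_term B C _ U hU2).symm
    -- second piece
    · have h2 : ∀ q s, star (fun p => U p q) ⬝ᵥ
            ((Bᴴ * ((ρ * P q s).trace • 1) * C).mulVec (fun p => U p s))
          = (if s = q then ((lam q : ℂ)) else 0) *
              (star (fun p => U p q) ⬝ᵥ (Bᴴ * C).mulVec (fun p => U p s)) := by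
        intro q s
        rw [htrP]
        have e3 : Bᴴ * ((if s = q then ((lam q : ℂ)) else 0) • 1) * C
            = (if s = q then ((lam q : ℂ)) else 0) • (Bᴴ * C) := by
          rw [Matrix.mul_smul, mul_one, Matrix.smul_mul]
        rw [e3, Matrix.smul_mulVec, dotProduct_smul, smul_eq_mul]
      simp_rw [h2, ite_mul, zero_mul, Finset.sum_ite_eq' Finset.univ]
      simp only [Finset.mem_univ, if_true]
      rw [mul_assoc, htrA]
  -- bound each term
  have hterm : ∀ q s, ‖star (fun p => U p q) ⬝ᵥ
        ((Bᴴ * ((fun Y => ∑ i, (V i)ᴴ * Y * V i)^[n] (P q s) - (ρ * P q s).trace • 1) * C).mulVec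
          (fun p => U p s))‖ ≤ gB q * (a * gC s) := by
    intro q s
    set Δ := (fun Y => ∑ i, (V i)ᴴ * Y * V i)^[n] (P q s) - (ρ * P q s).trace • 1 with hΔ
    have e4 : (Bᴴ * Δ * C).mulVec (fun p => U p s)
        = Bᴴ.mulVec (Δ.mulVec (C.mulVec (fun p => U p s))) := by
      rw [Matrix.mulVec_mulVec, Matrix.mulVec_mulVec]
    rw [e4, dot_conjT]
    have h5 := dot_mulVec_le (B.mulVec (fun p => U p q)) (C.mulVec (fun p => U p s)) Δ
    have h6 : Real.sqrt ((Δᴴ * Δ).trace.re) ≤ a := by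
      have := ha (P q s)
      rw [hPfro, Real.sqrt_one, mul_one] at this
      exact this
    calc ‖star (B.mulVec fun p => U p q) ⬝ᵥ Δ.mulVec (C.mulVec fun p => U p s)‖
        ≤ gnorm (B.mulVec fun p => U p q) *
            (Real.sqrt ((Δᴴ * Δ).trace.re) * gnorm (C.mulVec fun p => U p s)) := h5
      _ ≤ gB q * (a * gC s) := by
          refine mul_le_mul_of_nonneg_left ?_ (gnorm_nonneg _)
          exact mul_le_mul_of_nonneg_right h6 (gnorm_nonneg _)
  -- sum the bounds
  have hsum : ‖(∑ i : Fin n → Fin d,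
          (starRingEnd ℂ) ((B * (List.ofFn fun k => V (i k)).reverse.prod).trace) *
            ((C * (List.ofFn fun k => V (i k)).reverse.prod).trace)) -
        (ρ * Bᴴ * C).trace‖ ≤ a * ((∑ q, gB q) * (∑ s, gC s)) := by
    rw [hS]
    calc ‖∑ q, ∑ s, star (fun p => U p q) ⬝ᵥ
          ((Bᴴ * ((fun Y => ∑ i, (V i)ᴴ * Y * V i)^[n] (P q s) - (ρ * P q s).trace • 1) * C).mulVec
            (fun p => U p s))‖
        ≤ ∑ q, ∑ s, ‖star (fun p => U p q) ⬝ᵥ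
          ((Bᴴ * ((fun Y => ∑ i, (V i)ᴴ * Y * V i)^[n] (P q s) - (ρ * P q s).trace • 1) * C).mulVec
            (fun p => U p s))‖ :=
          (norm_sum_le _ _).trans (Finset.sum_le_sum fun q _ => norm_sum_le _ _)
      _ ≤ ∑ q, ∑ s, gB q * (a * gC s) :=
          Finset.sum_le_sum fun q _ => Finset.sum_le_sum fun s _ => hterm q s
      _ = a * ∑ q, ∑ s, gB q * gC s := by
          rw [Finset.mul_sum]
          refine Finset.sum_congr rfl fun q _ => ?_
          rw [Finset.mul_sum]
          exact Finset.sum_congr rfl fun s _ => by ring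
      _ = a * ((∑ q, gB q) * (∑ s, gC s)) := by
          congr 1
          exact (Finset.sum_mul_sum _ _ _ _).symm
  -- weighted Cauchy-Schwarz
  have hCS : ∀ (M : Matrix (Fin D) (Fin D) ℂ),
      (∑ q, gnorm (M.mulVec (fun p => U p q)))
        ≤ Real.sqrt ((ρ⁻¹).trace.re) * Real.sqrt ((ρ * Mᴴ * M).trace.re) := by
    intro M
    have e5 : ∀ q, gnorm (M.mulVec (fun p => U p q))
        = Real.sqrt ((lam q)⁻¹) * (Real.sqrt (lam q) * gnorm (M.mulVec (fun p => U p q))) := by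
      intro q
      rw [← mul_assoc, ← Real.sqrt_mul (inv_nonneg.mpr (hpos q).le), inv_mul_cancel₀ (hpos q).ne',
        Real.sqrt_one, one_mul]
    calc (∑ q, gnorm (M.mulVec (fun p => U p q)))
        = ∑ q, Real.sqrt ((lam q)⁻¹) * (Real.sqrt (lam q) * gnorm (M.mulVec (fun p => U p q))) :=
          Finset.sum_congr rfl fun q _ => e5 q
      _ ≤ Real.sqrt (∑ q, Real.sqrt ((lam q)⁻¹)^2) *
            Real.sqrt (∑ q, (Real.sqrt (lam q) * gnorm (M.mulVec (fun p => U p q)))^2) :=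
          Real.sum_mul_le_sqrt_mul_sqrt _ _ _
      _ = Real.sqrt ((ρ⁻¹).trace.re) * Real.sqrt ((ρ * Mᴴ * M).trace.re) := by
          congr 1
          · congr 1
            rw [hinvtr]
            exact Finset.sum_congr rfl fun q _ => Real.sq_sqrt (inv_nonneg.mpr (hpos q).le)
          · congr 1
            rw [hBtr M]
            refine Finset.sum_congr rfl fun q _ => ?_
            rw [mul_pow, Real.sq_sqrt (hpos q).le]
  -- final assembly
  have tnonneg : 0 ≤ (ρ⁻¹).trace.re := by
    rw [hinvtr]
    exact Finset.sum_nonneg fun q _ => inv_nonneg.mpr (hpos q).le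
  have bnonneg : 0 ≤ ∑ q, gB q := Finset.sum_nonneg fun q _ => gnorm_nonneg _
  have cnonneg : 0 ≤ ∑ s, gC s := Finset.sum_nonneg fun s _ => gnorm_nonneg _
  refine hsum.trans ?_
  have hfin : (∑ q, gB q) * (∑ s, gC s)
      ≤ (ρ⁻¹).trace.re * Real.sqrt ((ρ * Bᴴ * B).trace.re) * Real.sqrt ((ρ * Cᴴ * C).trace.re) := by
    calc (∑ q, gB q) * (∑ s, gC s)
        ≤ (Real.sqrt ((ρ⁻¹).trace.re) * Real.sqrt ((ρ * Bᴴ * B).trace.re)) *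
            (Real.sqrt ((ρ⁻¹).trace.re) * Real.sqrt ((ρ * Cᴴ * C).trace.re)) := by
          exact mul_le_mul (hCS B) (hCS C) cnonneg (by positivity)
      _ = (Real.sqrt ((ρ⁻¹).trace.re) * Real.sqrt ((ρ⁻¹).trace.re)) *
            (Real.sqrt ((ρ * Bᴴ * B).trace.re) * Real.sqrt ((ρ * Cᴴ * C).trace.re)) := by ring
      _ = (ρ⁻¹).trace.re * Real.sqrt ((ρ * Bᴴ * B).trace.re) *
            Real.sqrt ((ρ * Cᴴ * C).trace.re) := by
          rw [Real.mul_self_sqrt tnonneg]; ring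
  calc a * ((∑ q, gB q) * (∑ s, gC s))
      ≤ a * ((ρ⁻¹).trace.re * Real.sqrt ((ρ * Bᴴ * B).trace.re) *
          Real.sqrt ((ρ * Cᴴ * C).trace.re)) := mul_le_mul_of_nonneg_left hfin ha0
    _ = a * (ρ⁻¹).trace.re * Real.sqrt ((ρ * Bᴴ * B).trace.re) *
          Real.sqrt ((ρ * Cᴴ * C).trace.re) := by ring
end

section
/- For the spin-1 AKLT transfer operator 𝔼 on M_2(ℂ) defined by 𝔼(B) = (4/3)(S^X B S^X + S^Y B S^Y + S^Z B S^Z), the n-th power satisfies 𝔼^n(B) = Tr(B)·(1/2)·1 + 2(-1)^n 3^{-n} ∑_{U∈{X,Y,Z}} ⟨S^U, B⟩ S^U (with ⟨A,B⟩ = 2Tr(A*B)), and hence ‖𝔼^n - |1⟩⟨ρ|‖ = 3^{-n} in the operator norm induced by the Hilbert–Schmidt structure. -/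
/-!
With `P B = Tr(B)·(1/2)·1`, the orthogonal projection onto the multiples of the identity, the
Pauli identity `∑_U σ^U B σ^U = 2 Tr(B)·1 - B` (where `S^U = σ^U / 2`) gives
`𝔼 = P - (1/3)(1 - P)`. Hence `𝔼^n = P + (-1/3)^n (1 - P)`; the traceless part `(1 - P) B` is
the expansion of `B` in the spin matrices, and `1 - P` is a Hilbert–Schmidt contraction that
fixes `S^X`.
-/

open Matrix

/-- Hilbert–Schmidt norm of a matrix. -/
noncomputable def hsNorm {m : Type*} [Fintype m]
    (X : Matrix m m ℂ) : ℝ := Real.sqrt ((Xᴴ * X).trace.re)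

theorem Module.End.iterate_eq_add_pow_smul_of_isIdempotentElem {R M : Type*} [CommRing R]
    [AddCommGroup M] [Module R M] {P : Module.End R M} (hP : IsIdempotentElem P) {c : R}
    {f : M → M} (hf : ∀ x, f x = P x + c • (x - P x)) (n : ℕ) (x : M) :
    f^[n] x = P x + c ^ n • (x - P x) := by
  have hPP : ∀ y, P (P y) = P y := fun y => congrArg (· y) hP.eq
  induction n with
  | zero => simp
  | succ n ih =>
    rw [Function.iterate_succ_apply', ih, hf]
    simp only [map_add, map_smul, map_sub, hPP, sub_self, smul_zero, add_zero,
      add_sub_cancel_left, smul_smul, pow_succ']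

section HilbertSchmidt

variable {m : Type*} [Fintype m]

theorem re_trace_conjTranspose_mul_self (X : Matrix m m ℂ) :
    (Xᴴ * X).trace.re = ∑ i, ∑ j, Complex.normSq (X i j) := by
  simp only [trace, diag_apply, mul_apply, conjTranspose_apply, Complex.re_sum]
  rw [Finset.sum_comm]
  simp [Complex.normSq_apply, Complex.mul_re]

theorem hsNorm_smul (c : ℂ) (X : Matrix m m ℂ) : hsNorm (c • X) = ‖c‖ * hsNorm X := by
  rw [hsNorm, hsNorm, conjTranspose_smul, smul_mul, Matrix.mul_smul, trace_smul, trace_smul,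
    smul_smul, smul_eq_mul, Complex.star_def, ← Complex.normSq_eq_conj_mul_self,
    Complex.re_ofReal_mul, Real.sqrt_mul (Complex.normSq_nonneg c), Complex.norm_def]

end HilbertSchmidt

noncomputable def traceProj : Module.End ℂ (Matrix (Fin 2) (Fin 2) ℂ) :=
  LinearMap.smulRight (traceLinearMap (Fin 2) ℂ ℂ) ((1 / 2 : ℂ) • 1)

theorem traceProj_apply (B : Matrix (Fin 2) (Fin 2) ℂ) :
    traceProj B = B.trace • ((1 / 2 : ℂ) • 1) := rfl

theorem traceProj_of_trace_eq_zero {B : Matrix (Fin 2) (Fin 2) ℂ} (hB : B.trace = 0) :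
    traceProj B = 0 := by
  rw [traceProj_apply, hB, zero_smul]

theorem isIdempotentElem_traceProj : IsIdempotentElem traceProj := by
  refine LinearMap.ext fun B => ?_
  rw [Module.End.mul_apply, traceProj_apply, traceProj_apply, trace_smul, trace_smul, trace_one]
  norm_num

theorem two_mul_normSq_half_sub_le (a d : ℂ) :
    2 * Complex.normSq ((a - d) / 2) ≤ Complex.normSq a + Complex.normSq d := by
  -- the parallelogram law with the term `|a + d|²` dropped
  have := Complex.normSq_nonneg (a + d)
  rw [map_div₀, Complex.normSq_ofNat]
  linarith [Complex.normSq_add a d, Complex.normSq_sub a d]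

theorem hsNorm_sub_traceProj_le (B : Matrix (Fin 2) (Fin 2) ℂ) :
    hsNorm (B - traceProj B) ≤ hsNorm B := by
  have hentries : B - traceProj B =
      !![(B 0 0 - B 1 1) / 2, B 0 1; B 1 0, -((B 0 0 - B 1 1) / 2)] := by
    ext i j
    fin_cases i <;> fin_cases j <;> simp [traceProj_apply, trace_fin_two] <;> ring
  apply Real.sqrt_le_sqrt
  rw [hentries, re_trace_conjTranspose_mul_self, re_trace_conjTranspose_mul_self]
  simp only [Fin.sum_univ_two, of_apply, cons_val', cons_val_zero, cons_val_one, empty_val',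
    cons_val_fin_one, Complex.normSq_neg]
  linarith [two_mul_normSq_half_sub_le (B 0 0) (B 1 1)]

noncomputable def spinX : Matrix (Fin 2) (Fin 2) ℂ := (1 / 2 : ℂ) • !![0, 1; 1, 0]

noncomputable def spinY : Matrix (Fin 2) (Fin 2) ℂ :=
  (1 / 2 : ℂ) • !![0, -Complex.I; Complex.I, 0]

noncomputable def spinZ : Matrix (Fin 2) (Fin 2) ℂ := (1 / 2 : ℂ) • !![1, 0; 0, -1]

theorem isHermitian_spinX : spinX.IsHermitian := by
  ext i j; fin_cases i <;> fin_cases j <;> simp [spinX]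

theorem isHermitian_spinY : spinY.IsHermitian := by
  ext i j; fin_cases i <;> fin_cases j <;> simp [spinY]

theorem isHermitian_spinZ : spinZ.IsHermitian := by
  ext i j; fin_cases i <;> fin_cases j <;> simp [spinZ]

theorem trace_spinX : spinX.trace = 0 := by
  simp [spinX, trace_fin_two]

theorem spinX_ne_zero : spinX ≠ 0 := fun h => by
  simpa [spinX] using congrFun (congrFun h 0) 1

theorem aklt_transfer_eq (B : Matrix (Fin 2) (Fin 2) ℂ) :
    (4 / 3 : ℂ) • (spinX * B * spinX + spinY * B * spinY + spinZ * B * spinZ) =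
      traceProj B + (-1 / 3 : ℂ) • (B - traceProj B) := by
  rw [eta_fin_two B]
  ext i j
  fin_cases i <;> fin_cases j <;>
    simp [spinX, spinY, spinZ, traceProj_apply, trace_fin_two] <;>
    ring_nf <;> simp [Complex.I_sq] <;> ring

theorem sub_traceProj_eq_spin_expansion (B : Matrix (Fin 2) (Fin 2) ℂ) :
    B - traceProj B = (2 : ℂ) •
      ((spinXᴴ * B).trace • spinX + (spinYᴴ * B).trace • spinY + (spinZᴴ * B).trace • spinZ) := by
  rw [isHermitian_spinX.eq, isHermitian_spinY.eq, isHermitian_spinZ.eq, eta_fin_two B]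
  ext i j
  fin_cases i <;> fin_cases j <;>
    simp [spinX, spinY, spinZ, traceProj_apply, trace_fin_two] <;>
    ring_nf <;> simp [Complex.I_sq] <;> ring

/-- For the spin-1 AKLT transfer operator `𝔼`, the `n`-th power is
`𝔼^n(B) = Tr(B)·(1/2)·1 + 2(-1)^n 3^{-n} ∑_U Tr(S^Uᴴ B) S^U`, and hence
`‖𝔼^n - |1⟩⟨ρ|‖ = 3^{-n}` in the Hilbert–Schmidt operator norm (the bound holds for
all `B` and is attained). -/
theorem stmt13 (n : ℕ) (SX SY SZ : Matrix (Fin 2) (Fin 2) ℂ)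
    (hSX : SX = (1/2 : ℂ) • !![0, 1; 1, 0])
    (hSY : SY = (1/2 : ℂ) • !![0, -Complex.I; Complex.I, 0])
    (hSZ : SZ = (1/2 : ℂ) • !![1, 0; 0, -1])
    (E : Matrix (Fin 2) (Fin 2) ℂ → Matrix (Fin 2) (Fin 2) ℂ)
    (hE : ∀ B, E B = (4/3 : ℂ) • (SX * B * SX + SY * B * SY + SZ * B * SZ)) :
    (∀ B, E^[n] B = B.trace • ((1/2 : ℂ) • 1) +
        (2 * (-1) ^ n / 3 ^ n : ℂ) •
          ((SXᴴ * B).trace • SX + (SYᴴ * B).trace • SY + (SZᴴ * B).trace • SZ)) ∧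
      (∀ B, hsNorm (E^[n] B - B.trace • ((1/2 : ℂ) • 1)) ≤ (1 / 3 ^ n : ℝ) * hsNorm B) ∧
      (∃ B : Matrix (Fin 2) (Fin 2) ℂ, B ≠ 0 ∧
        hsNorm (E^[n] B - B.trace • ((1/2 : ℂ) • 1)) = (1 / 3 ^ n : ℝ) * hsNorm B) := by
  obtain rfl : SX = spinX := hSX
  obtain rfl : SY = spinY := hSY
  obtain rfl : SZ = spinZ := hSZ
  have hiter : ∀ B, E^[n] B = traceProj B + (-1 / 3 : ℂ) ^ n • (B - traceProj B) :=
    Module.End.iterate_eq_add_pow_smul_of_isIdempotentElem isIdempotentElem_traceProj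
      (fun B => (hE B).trans (aklt_transfer_eq B)) n
  have hdev : ∀ B, E^[n] B - B.trace • ((1 / 2 : ℂ) • 1) =
      (-1 / 3 : ℂ) ^ n • (B - traceProj B) := fun B => by
    rw [hiter, traceProj_apply, add_sub_cancel_left]
  have hnorm : ‖(-1 / 3 : ℂ) ^ n‖ = 1 / 3 ^ n := by simp
  refine ⟨fun B => ?_, fun B => ?_, spinX, spinX_ne_zero, ?_⟩
  · rw [hiter, sub_traceProj_eq_spin_expansion, smul_smul, traceProj_apply]
    congr 2
    rw [div_pow]
    ring
  · rw [hdev, hsNorm_smul, hnorm]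
    gcongr
    exact hsNorm_sub_traceProj_le B
  · rw [hdev, traceProj_of_trace_eq_zero trace_spinX, sub_zero, hsNorm_smul, hnorm]
end
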